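/- arXiv:math/0408262 — 9 statements merged into one kernel-verified Lean document; each statement's English description precedes it below -/
import Mathlib

section
/- Let φ be a descending closure operator on a finite poset P and let x be a minimal element of P \ φ(P). Then the restriction of φ to P \ {x} is a descending closure operator on P \ {x}, and its image equals φ(P). -/
/-- If `x` is a minimal element of `P \ φ(P)` for a descending closure operator `φ`
on a finite poset `P`, then `φ` restricts to a descending closure operator on
`P \ {x}` whose image equals `φ(P)`. -/
theorem stmt_2 {P : Type*} [PartialOrder P] [Fintype P] (φ : P → P)
    (hmono : Monotone φ) (hidem : ∀ x, φ (φ x) = φ x) (hdesc : ∀ x, φ x ≤ x)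
    (x : P) (hx : x ∉ Set.range φ)
    (hmin : ∀ y, y < x → y ∈ Set.range φ) :
    ∃ ψ : {y : P // y ≠ x} → {y : P // y ≠ x},
      (∀ y, (ψ y : P) = φ (y : P)) ∧
      Monotone ψ ∧ (∀ y, ψ (ψ y) = ψ y) ∧ (∀ y, ψ y ≤ y) ∧
      Subtype.val '' Set.range ψ = Set.range φ := by
  have hne : ∀ y : P, φ y ≠ x := fun y h => hx ⟨y, h⟩
  refine ⟨fun y => ⟨φ y, hne y⟩, fun y => rfl, ?_, ?_, ?_, ?_⟩
  · intro a b hab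
    exact hmono hab
  · intro y
    exact Subtype.ext (hidem y)
  · intro y
    exact hdesc y
  · ext z
    constructor
    · rintro ⟨w, ⟨y, rfl⟩, rfl⟩
      exact ⟨y, rfl⟩
    · rintro ⟨y, rfl⟩
      exact ⟨⟨φ y, hne y⟩, ⟨⟨φ y, hne y⟩, Subtype.ext (hidem y)⟩, rfl⟩
end

section
/- Let φ be a descending closure operator on a poset P. Define a matching on the nonempty finite chains of P not contained in φ(P) as follows: for a chain c = (x₁ < ⋯ < x_k) with minimal index i such that x_i ∉ φ(P), match c with c \ {x_{i-1}} if i > 1 and φ(x_i) = x_{i-1}, and otherwise match c with c ∪ {φ(x_i)}. Then this is a well-defined involution on the set of chains of P not contained in φ(P), and each matched pair consists of a chain and the same chain with one element added (the added element being φ(x_i)). -/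
/-!
Let `a` be the least element of the chain `c` outside `φ(P)`; the matching toggles `φ a`, i.e.
sends `c` to `c ∆ {φ a}`. Since `φ a ∈ φ(P)`, toggling it does not change the elements of `c`
outside `φ(P)`, so `a` is also the least such element of `c ∆ {φ a}` and toggling again gives
back `c`. Adding `φ a` keeps `c` a chain: an element `b ≥ a` satisfies `φ a ≤ a ≤ b`, and an
element `b ≤ a` lies in `φ(P)` by minimality of `a`, so `b = φ b ≤ φ a`.
-/

open Set
open scoped symmDiff

theorem IsChain.exists_isLeast_of_finite {α : Type*} [Preorder α] {s : Set α}
    (hs : IsChain (· ≤ ·) s) (hfin : s.Finite) (hne : s.Nonempty) : ∃ a, IsLeast s a := by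
  obtain ⟨a, ha⟩ := hfin.exists_minimal hne
  exact ⟨a, ha.prop, fun b hb => (hs.total ha.prop hb).elim id (ha.le_of_le hb)⟩

theorem symmDiff_sdiff_of_le {α : Type*} [GeneralizedBooleanAlgebra α] {a b c : α}
    (h : b ≤ c) : a ∆ b \ c = a \ c := by
  rw [symmDiff_sdiff, sup_eq_right.2 h, sdiff_eq_bot_iff.2 (le_sup_of_le_right h), sup_bot_eq]

theorem Finset.symmDiff_singleton_of_mem {α : Type*} [DecidableEq α] {s : Finset α} {x : α}
    (h : x ∈ s) : s ∆ {x} = s.erase x := by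
  rw [symmDiff_of_ge (Finset.singleton_subset_iff.2 h), Finset.sdiff_singleton_eq_erase]

theorem Finset.symmDiff_singleton_of_notMem {α : Type*} [DecidableEq α] {s : Finset α} {x : α}
    (h : x ∉ s) : s ∆ {x} = insert x s := by
  rw [(Finset.disjoint_singleton_right.2 h).symmDiff_eq_sup, Finset.sup_eq_union,
    Finset.insert_eq, Finset.union_comm]

namespace DescendingClosure

open Classical

variable {P : Type*} {φ : P → P}

theorem coe_symmDiff_singleton_diff_range (c : Finset P) (a : P) :
    (↑(c ∆ {φ a}) : Set P) \ range φ = ↑c \ range φ := by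
  rw [Finset.coe_symmDiff, Finset.coe_singleton,
    symmDiff_sdiff_of_le (singleton_subset_iff.2 (mem_range_self a))]

variable [PartialOrder P]

def IsUnclosedChain (φ : P → P) (c : Finset P) : Prop :=
  c.Nonempty ∧ IsChain (· ≤ ·) (c : Set P) ∧ ¬ (c : Set P) ⊆ range φ

theorem IsUnclosedChain.exists_isLeast {c : Finset P} (hc : IsUnclosedChain φ c) :
    ∃ a, IsLeast (↑c \ range φ) a :=
  (hc.2.1.mono sdiff_subset).exists_isLeast_of_finite c.finite_toSet.sdiff
    (sdiff_nonempty.2 hc.2.2)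

theorem isChain_insert_of_isLeast (hmono : Monotone φ) (hidem : ∀ x, φ (φ x) = φ x)
    (hdesc : ∀ x, φ x ≤ x) {s : Set P} (hs : IsChain (· ≤ ·) s) {a : P}
    (ha : IsLeast (s \ range φ) a) : IsChain (· ≤ ·) (insert (φ a) s) := by
  refine hs.insert fun b hb _ => ?_
  by_cases hbφ : b ∈ range φ
  · obtain ⟨y, rfl⟩ := hbφ
    rcases hs.total ha.1.1 hb with hab | hba
    · exact Or.inl ((hdesc a).trans hab)
    · exact Or.inr (hidem y ▸ hmono hba)
  · exact Or.inl ((hdesc a).trans (ha.2 ⟨hb, hbφ⟩))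

theorem IsUnclosedChain.symmDiff_singleton (hmono : Monotone φ) (hidem : ∀ x, φ (φ x) = φ x)
    (hdesc : ∀ x, φ x ≤ x) {c : Finset P} (hc : IsUnclosedChain φ c) {a : P}
    (ha : IsLeast (↑c \ range φ) a) : IsUnclosedChain φ (c ∆ {φ a}) := by
  have hout : ((↑(c ∆ {φ a}) : Set P) \ range φ).Nonempty := by
    rw [coe_symmDiff_singleton_diff_range]
    exact sdiff_nonempty.2 hc.2.2
  refine ⟨Finset.coe_nonempty.1 (hout.mono sdiff_subset), ?_, sdiff_nonempty.1 hout⟩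
  refine (isChain_insert_of_isLeast hmono hidem hdesc hc.2.1 ha).mono fun b hb => ?_
  rw [Finset.mem_coe, Finset.mem_symmDiff, Finset.mem_singleton] at hb
  rcases hb with ⟨hb, -⟩ | ⟨rfl, -⟩
  · exact mem_insert_of_mem _ hb
  · exact mem_insert _ _

/-- The paper's two cases, removing `x_{i-1} = φ(x_i)` or adding `φ(x_i)`, are the two cases of
toggling `φ(x_i)`. Off unclosed chains the value is junk. -/
noncomputable def partner (φ : P → P) (c : Finset P) : Finset P :=
  if hc : IsUnclosedChain φ c then c ∆ {φ hc.exists_isLeast.choose} else c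

theorem partner_eq {c : Finset P} (hc : IsUnclosedChain φ c) {a : P}
    (ha : IsLeast (↑c \ range φ) a) : partner φ c = c ∆ {φ a} := by
  rw [partner, dif_pos hc, hc.exists_isLeast.choose_spec.unique ha]

theorem IsUnclosedChain.partner (hmono : Monotone φ) (hidem : ∀ x, φ (φ x) = φ x)
    (hdesc : ∀ x, φ x ≤ x) {c : Finset P} (hc : IsUnclosedChain φ c) :
    IsUnclosedChain φ (partner φ c) := by
  obtain ⟨a, ha⟩ := hc.exists_isLeast
  rw [partner_eq hc ha]
  exact hc.symmDiff_singleton hmono hidem hdesc ha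

theorem partner_partner (hmono : Monotone φ) (hidem : ∀ x, φ (φ x) = φ x)
    (hdesc : ∀ x, φ x ≤ x) {c : Finset P} (hc : IsUnclosedChain φ c) :
    partner φ (partner φ c) = c := by
  obtain ⟨a, ha⟩ := hc.exists_isLeast
  have ha' : IsLeast (↑(c ∆ {φ a}) \ range φ) a := by
    rwa [coe_symmDiff_singleton_diff_range]
  rw [partner_eq hc ha, partner_eq (hc.symmDiff_singleton hmono hidem hdesc ha) ha',
    symmDiff_symmDiff_cancel_right]

end DescendingClosure

open DescendingClosure

open Classical in
/-- The matching on nonempty finite chains of `P` not contained in `φ(P)`: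
for a chain `c` whose least element not in `φ(P)` is `a`, `c` is matched with
`c \ {φ a}` if `φ a ∈ c` (the case `i > 1`, `φ(x_i) = x_{i-1}`), and with
`c ∪ {φ a}` otherwise.  This is a well-defined involution on the set of such
chains, and each matched pair is a chain together with the same chain with the
one element `φ a` added. -/
theorem stmt_4 {P : Type*} [PartialOrder P] (φ : P → P)
    (hmono : Monotone φ) (hidem : ∀ x, φ (φ x) = φ x) (hdesc : ∀ x, φ x ≤ x) :
    ∃ m : {c : Finset P // c.Nonempty ∧ IsChain (· ≤ ·) (c : Set P) ∧
            ¬ (c : Set P) ⊆ Set.range φ} →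
          {c : Finset P // c.Nonempty ∧ IsChain (· ≤ ·) (c : Set P) ∧
            ¬ (c : Set P) ⊆ Set.range φ},
      (∀ c, m (m c) = c) ∧
      (∀ (c : {c : Finset P // c.Nonempty ∧ IsChain (· ≤ ·) (c : Set P) ∧
            ¬ (c : Set P) ⊆ Set.range φ}) (a : P), a ∈ c.1 → a ∉ Set.range φ →
        (∀ b ∈ c.1, b ∉ Set.range φ → a ≤ b) →
        ((φ a ∈ c.1 ∧ φ a ≠ a ∧ (m c).1 = c.1.erase (φ a)) ∨
         (φ a ∉ c.1 ∧ (m c).1 = insert (φ a) c.1))) := by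
  refine ⟨fun c => ⟨partner φ c.1, IsUnclosedChain.partner hmono hidem hdesc c.2⟩,
    fun c => Subtype.ext (partner_partner hmono hidem hdesc c.2),
    fun c a ha haφ hleast => ?_⟩
  have hpartner : partner φ c.1 = c.1 ∆ {φ a} :=
    partner_eq c.2 ⟨⟨ha, haφ⟩, fun b hb => hleast b hb.1 hb.2⟩
  by_cases h : φ a ∈ c.1
  · exact Or.inl ⟨h, fun e => haφ ⟨a, e⟩, hpartner.trans (Finset.symmDiff_singleton_of_mem h)⟩
  · exact Or.inr ⟨h, hpartner.trans (Finset.symmDiff_singleton_of_notMem h)⟩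
end

section
/- Let G − v be a fold of G witnessed by u, and let H be a graph. Identify the face poset of Hom(G−v, H) with the subposet of the face poset of Hom(G,H) consisting of those η with η(v) = η(u). Define α on the face poset of Hom(G,H) by αη(v) = η(u) ∪ η(v) and αη(x) = η(x) for x ≠ v. Then α is well-defined (αη again satisfies the complete-bipartite edge condition) and is an ascending closure operator: monotone, idempotent, and αη ≥ η for all η. -/
/-!
Every label of `αη` at `x` is a label of `η` at a vertex dominating `x` (namely `x` itself, or `u`
when `x = v`). Replacing both ends of an edge by dominating vertices keeps them adjacent, so the
edge condition passes from `η` to `αη`. The closure properties come from `αη(u) = η(u)`.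
-/

namespace SimpleGraph

variable {VG VH : Type*}

/-- Faces of the Hom complex `Hom(G, H)`. -/
def IsHomFace (G : SimpleGraph VG) (H : SimpleGraph VH) (η : VG → Set VH) : Prop :=
  (∀ x, (η x).Nonempty) ∧ ∀ x y, G.Adj x y → ∀ a ∈ η x, ∀ b ∈ η y, H.Adj a b

section foldMerge

variable [DecidableEq VG] (u v : VG) (η : VG → Set VH)

/-- The closure operator `α` attached to the fold `G − v` witnessed by `u`. -/
def foldMerge : VG → Set VH := fun x => if x = v then η u ∪ η v else η x

theorem foldMerge_apply_self : foldMerge u v η v = η u ∪ η v := if_pos rfl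

theorem foldMerge_apply_of_ne {x : VG} (hx : x ≠ v) : foldMerge u v η x = η x := if_neg hx

theorem foldMerge_apply_left : foldMerge u v η u = η u := by
  by_cases huv : u = v
  · subst huv
    rw [foldMerge_apply_self, Set.union_self]
  · exact foldMerge_apply_of_ne u v η huv

theorem le_foldMerge : η ≤ foldMerge u v η := by
  intro x
  by_cases hx : x = v
  · subst hx
    rw [foldMerge_apply_self]
    exact Set.subset_union_right
  · rw [foldMerge_apply_of_ne u v η hx]

theorem foldMerge_mono : Monotone (foldMerge (VH := VH) u v) := by
  intro η η' h x
  by_cases hx : x = v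
  · subst hx
    simp only [foldMerge_apply_self]
    exact Set.union_subset_union (h u) (h x)
  · simp only [foldMerge_apply_of_ne u v _ hx]
    exact h x

theorem foldMerge_idem : foldMerge u v (foldMerge u v η) = foldMerge u v η := by
  funext x
  by_cases hx : x = v
  · subst hx
    simp only [foldMerge_apply_self, foldMerge_apply_left, ← Set.union_assoc, Set.union_self]
  · simp only [foldMerge_apply_of_ne u v _ hx]

theorem exists_dominating_of_mem_foldMerge {G : SimpleGraph VG}
    (hfold : G.neighborSet v ⊆ G.neighborSet u) {x : VG} {a : VH} (ha : a ∈ foldMerge u v η x) :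
    ∃ x', a ∈ η x' ∧ G.neighborSet x ⊆ G.neighborSet x' := by
  by_cases hx : x = v
  · subst hx
    rw [foldMerge_apply_self] at ha
    rcases ha with ha | ha
    · exact ⟨u, ha, hfold⟩
    · exact ⟨x, ha, le_rfl⟩
  · rw [foldMerge_apply_of_ne u v η hx] at ha
    exact ⟨x, ha, le_rfl⟩

theorem IsHomFace.foldMerge {G : SimpleGraph VG} {H : SimpleGraph VH} {η : VG → Set VH}
    (hη : G.IsHomFace H η) (hfold : G.neighborSet v ⊆ G.neighborSet u) :
    G.IsHomFace H (foldMerge u v η) := by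
  refine ⟨fun x => (hη.1 x).mono (le_foldMerge u v η x), ?_⟩
  intro x y hxy a ha b hb
  obtain ⟨x', ha', hx'⟩ := exists_dominating_of_mem_foldMerge u v η hfold ha
  obtain ⟨y', hb', hy'⟩ := exists_dominating_of_mem_foldMerge u v η hfold hb
  have hx'y : G.Adj x' y := hx' hxy
  have hx'y' : G.Adj x' y' := (hy' hx'y.symm).symm
  exact hη.2 x' y' hx'y' a ha' b hb'

end foldMerge

end SimpleGraph

open Classical in
theorem stmt_8_general {VG VH : Type*} (G : SimpleGraph VG) (H : SimpleGraph VH)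
    (v u : VG) (hfold : G.neighborSet v ⊆ G.neighborSet u) :
    letI S : Set (VG → Set VH) :=
      {η | (∀ x, (η x).Nonempty) ∧
        ∀ x y, G.Adj x y → ∀ a ∈ η x, ∀ b ∈ η y, H.Adj a b}
    letI α : (VG → Set VH) → (VG → Set VH) :=
      fun η x => if x = v then η u ∪ η v else η x
    (∀ η ∈ S, α η ∈ S) ∧
    (∀ η η' : VG → Set VH, η ≤ η' → α η ≤ α η') ∧
    (∀ η, α (α η) = α η) ∧
    (∀ η, η ≤ α η) :=
  ⟨fun _ hη => SimpleGraph.IsHomFace.foldMerge u v hη hfold,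
    fun _ _ h => SimpleGraph.foldMerge_mono u v h,
    SimpleGraph.foldMerge_idem u v,
    SimpleGraph.le_foldMerge u v⟩

open Classical in
/-- Let `G − v` be a fold of `G` witnessed by `u`, `H` a graph. The map `α` on
the face poset of `Hom(G,H)` with `αη(v) = η(u) ∪ η(v)`, `αη(x) = η(x)` for
`x ≠ v`, is well defined and is an ascending closure operator: monotone,
idempotent, and `αη ≥ η`. -/
theorem stmt_8 {VG VH : Type*} (G : SimpleGraph VG) (H : SimpleGraph VH)
    (v u : VG) (huv : u ≠ v) (hfold : G.neighborSet v ⊆ G.neighborSet u) :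
    letI S : Set (VG → Set VH) :=
      {η | (∀ x, (η x).Nonempty) ∧
        ∀ x y, G.Adj x y → ∀ a ∈ η x, ∀ b ∈ η y, H.Adj a b}
    letI α : (VG → Set VH) → (VG → Set VH) :=
      fun η x => if x = v then η u ∪ η v else η x
    (∀ η ∈ S, α η ∈ S) ∧
    (∀ η η' : VG → Set VH, η ≤ η' → α η ≤ α η') ∧
    (∀ η, α (α η) = α η) ∧
    (∀ η, η ≤ α η) :=
  stmt_8_general G H v u hfold
end

section
/- Let G − v be a fold of G witnessed by u, and H a graph. Let X be the subposet of the face poset of Hom(G,H) consisting of all η with η(u) ⊆ η(v). Define β on X by βη(v) = η(u) and βη(x) = η(x) for x ≠ v. Then β is well-defined and is a descending closure operator on X, with image equal to the copy of the face poset of Hom(G−v,H) given by {η : η(v) = η(u)}. -/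
/-!
Sending `v` to `u` is an endomorphism `f` of `G` because `N(v) ⊆ N(u)`, and `β η` is the pull-back
`η ∘ f`, so `β` preserves cells of `Hom(G,H)`. The order-theoretic properties hold because `β` only
replaces the value at `v` by the value at `u`, which it leaves untouched.
-/

open Function

namespace SimpleGraph

variable {V V' W : Type*} {G : SimpleGraph V} {G' : SimpleGraph V'} {H : SimpleGraph W}
  {η : V → Set W} {u v : V}

def IsHomCell (G : SimpleGraph V) (H : SimpleGraph W) (η : V → Set W) : Prop :=
  (∀ x, (η x).Nonempty) ∧ ∀ x y, G.Adj x y → ∀ a ∈ η x, ∀ b ∈ η y, H.Adj a b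

theorem IsHomCell.comp (hη : G.IsHomCell H η) (f : G' →g G) : G'.IsHomCell H (η ∘ f) :=
  ⟨fun x => hη.1 (f x), fun _ _ hxy => hη.2 _ _ (f.map_rel hxy)⟩

variable [DecidableEq V]

def foldHom (hfold : G.neighborSet v ⊆ G.neighborSet u) : G →g G where
  toFun := update id v u
  map_rel' {x y} hxy := by
    rcases eq_or_ne x v with rfl | hx
    · simpa [hxy.ne'] using hfold hxy
    · rcases eq_or_ne y v with rfl | hy
      · simpa [hx] using (hfold hxy.symm).symm
      · simpa [hx, hy] using hxy

theorem IsHomCell.update_of_neighborSet_subset (hη : G.IsHomCell H η)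
    (hfold : G.neighborSet v ⊆ G.neighborSet u) : G.IsHomCell H (update η v (η u)) := by
  have hcomp : η ∘ foldHom hfold = update η v (η u) := comp_update η id v u
  exact hcomp ▸ hη.comp (foldHom hfold)

end SimpleGraph

open Classical in
/-- Let `G − v` be a fold of `G` witnessed by `u`, `H` a graph, and `X` the
subposet of the face poset of `Hom(G,H)` consisting of all `η` with
`η(u) ⊆ η(v)`.  The map `β` with `βη(v) = η(u)`, `βη(x) = η(x)` for `x ≠ v`,
is well defined and is a descending closure operator on `X` whose image is the
copy `{η : η(v) = η(u)}` of the face poset of `Hom(G−v,H)`. -/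
theorem stmt_9 {VG VH : Type*} (G : SimpleGraph VG) (H : SimpleGraph VH)
    (v u : VG) (huv : u ≠ v) (hfold : G.neighborSet v ⊆ G.neighborSet u) :
    letI S : Set (VG → Set VH) :=
      {η | (∀ x, (η x).Nonempty) ∧
        ∀ x y, G.Adj x y → ∀ a ∈ η x, ∀ b ∈ η y, H.Adj a b}
    letI X : Set (VG → Set VH) := {η ∈ S | η u ⊆ η v}
    letI β : (VG → Set VH) → (VG → Set VH) :=
      fun η x => if x = v then η u else η x
    (∀ η ∈ X, β η ∈ X) ∧
    (∀ η ∈ X, ∀ η' ∈ X, η ≤ η' → β η ≤ β η') ∧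
    (∀ η ∈ X, β (β η) = β η) ∧
    (∀ η ∈ X, β η ≤ η) ∧
    β '' X = {η ∈ S | η v = η u} := by
  have hβ : (fun (η : VG → Set VH) x => if x = v then η u else η x) =
      fun η => update η v (η u) := by
    funext η x
    simp [update_apply]
  rw [hβ]
  have hβ_mem : ∀ η, G.IsHomCell H η ∧ η u ⊆ η v →
      G.IsHomCell H (update η v (η u)) ∧ update η v (η u) u ⊆ update η v (η u) v :=
    fun η hη => ⟨hη.1.update_of_neighborSet_subset hfold, by simp [update_of_ne huv]⟩
  refine ⟨hβ_mem, ?_, ?_, ?_, ?_⟩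
  · exact fun η _ η' _ hle => update_le_update_iff.2 ⟨hle u, fun j _ => hle j⟩
  · exact fun η _ => by simp [update_of_ne huv]
  · exact fun η hη => update_le_self_iff.2 hη.2
  · ext η
    refine ⟨?_, fun ⟨hη, hvu⟩ => ⟨η, ⟨hη, hvu.ge⟩, update_eq_self_iff.2 hvu.symm⟩⟩
    rintro ⟨θ, hθ, rfl⟩
    exact ⟨(hβ_mem θ hθ).1, by simp [update_of_ne huv]⟩
end

section
/- Let G − v be a fold of G witnessed by u, let H be a graph, let α and β be the ascending and descending closure operators from the previous items, on the face poset P of Hom(G,H) and on X = {η ∈ P : η(u) ⊆ η(v)} respectively. Then α maps P into X, and the composite β ∘ α : P → P equals the map induced by precomposition with the inclusion i : G − v → G, i.e., (β∘α)(η) is the function sending v to η(u) and agreeing with η elsewhere. -/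
namespace SimpleGraph

variable {V W : Type*} {G : SimpleGraph V} {H : SimpleGraph W}

/-- A cell of the Hom complex `Hom(G, H)`: nonempty lists of targets, adjacent along every edge. -/
def IsMultihom (G : SimpleGraph V) (H : SimpleGraph W) (η : V → Set W) : Prop :=
  (∀ x, (η x).Nonempty) ∧ ∀ x y, G.Adj x y → ∀ a ∈ η x, ∀ b ∈ η y, H.Adj a b

namespace IsMultihom

variable {η : V → Set W}

lemma update [DecidableEq V] (hη : IsMultihom G H η) {v : V} {s : Set W} (hs : s.Nonempty)
    (hadj : ∀ y, G.Adj v y → ∀ a ∈ s, ∀ b ∈ η y, H.Adj a b) :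
    IsMultihom G H (Function.update η v s) := by
  refine ⟨fun x => ?_, fun x y hxy a ha b hb => ?_⟩
  · rcases eq_or_ne x v with rfl | hx
    · simpa using hs
    · simpa [hx] using hη.1 x
  rcases eq_or_ne x v with rfl | hx
  · have hy : y ≠ x := hxy.ne.symm
    simp only [Function.update_self, Function.update_of_ne hy] at ha hb
    exact hadj y hxy a ha b hb
  rcases eq_or_ne y v with rfl | hy
  · simp only [Function.update_self, Function.update_of_ne hx] at ha hb
    exact (hadj x hxy.symm b hb a ha).symm
  · simp only [Function.update_of_ne hx, Function.update_of_ne hy] at ha hb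
    exact hη.2 x y hxy a ha b hb

lemma adj_of_mem_union (hη : IsMultihom G H η) {u v : V}
    (hfold : G.neighborSet v ⊆ G.neighborSet u) {y : V} (hvy : G.Adj v y) :
    ∀ a ∈ η u ∪ η v, ∀ b ∈ η y, H.Adj a b
  | a, .inl ha, b, hb => hη.2 u y (hfold hvy) a ha b hb
  | a, .inr ha, b, hb => hη.2 v y hvy a ha b hb

lemma update_union [DecidableEq V] (hη : IsMultihom G H η) {u v : V}
    (hfold : G.neighborSet v ⊆ G.neighborSet u) :
    IsMultihom G H (Function.update η v (η u ∪ η v)) :=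
  hη.update ((hη.1 u).mono Set.subset_union_left) fun _ hvy => hη.adj_of_mem_union hfold hvy

end IsMultihom

end SimpleGraph

open SimpleGraph

open Classical in
theorem stmt_10_general {VG VH : Type*} (G : SimpleGraph VG) (H : SimpleGraph VH)
    (v u : VG) (hfold : G.neighborSet v ⊆ G.neighborSet u) :
    letI S : Set (VG → Set VH) :=
      {η | (∀ x, (η x).Nonempty) ∧
        ∀ x y, G.Adj x y → ∀ a ∈ η x, ∀ b ∈ η y, H.Adj a b}
    letI X : Set (VG → Set VH) := {η ∈ S | η u ⊆ η v}
    letI α : (VG → Set VH) → (VG → Set VH) :=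
      fun η x => if x = v then η u ∪ η v else η x
    letI β : (VG → Set VH) → (VG → Set VH) :=
      fun η x => if x = v then η u else η x
    (∀ η ∈ S, α η ∈ X) ∧
    (∀ η ∈ S, β (α η) = fun x => if x = v then η u else η x) := by
  have hα (η : VG → Set VH) :
      (fun x => if x = v then η u ∪ η v else η x) = Function.update η v (η u ∪ η v) :=
    funext fun x => (Function.update_apply η v _ x).symm
  refine ⟨fun η hη => ⟨?_, fun a ha => ?_⟩, fun η _ => funext fun x => ?_⟩
  · change IsMultihom G H (fun x => if x = v then η u ∪ η v else η x)
    rw [hα]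
    exact IsMultihom.update_union hη hfold
  · dsimp only at ha ⊢
    split_ifs at ha <;> simp [ha]
  · dsimp only
    split_ifs <;> simp_all

open Classical in
/-- With `α` and `β` the ascending/descending closure operators associated to a
fold `G − v` of `G` (witnessed by `u`) and a graph `H`: `α` maps the face poset
`P` of `Hom(G,H)` into `X = {η ∈ P : η(u) ⊆ η(v)}`, and the composite `β ∘ α`
is the map induced by the inclusion `i : G−v → G`, sending `η` to the function
equal to `η(u)` at `v` and agreeing with `η` elsewhere. -/
theorem stmt_10 {VG VH : Type*} (G : SimpleGraph VG) (H : SimpleGraph VH)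
    (v u : VG) (huv : u ≠ v) (hfold : G.neighborSet v ⊆ G.neighborSet u) :
    letI S : Set (VG → Set VH) :=
      {η | (∀ x, (η x).Nonempty) ∧
        ∀ x y, G.Adj x y → ∀ a ∈ η x, ∀ b ∈ η y, H.Adj a b}
    letI X : Set (VG → Set VH) := {η ∈ S | η u ⊆ η v}
    letI α : (VG → Set VH) → (VG → Set VH) :=
      fun η x => if x = v then η u ∪ η v else η x
    letI β : (VG → Set VH) → (VG → Set VH) :=
      fun η x => if x = v then η u else η x
    (∀ η ∈ S, α η ∈ X) ∧
    (∀ η ∈ S, β (α η) = fun x => if x = v then η u else η x) :=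
  stmt_10_general G H v u hfold
end

section
/- Let G − v be a fold of G witnessed by u, and H a graph. Define Y as the subposet of the face poset of Hom(H,G) consisting of all η such that for every x ∈ V(H), if v ∈ η(x) then u ∈ η(x). Define φ by φη(x) = η(x) ∪ {u} if v ∈ η(x) and φη(x) = η(x) otherwise. Then φ is well-defined as a map into Y (each φη satisfies the edge condition) and is an ascending closure operator on the face poset of Hom(H,G). -/
-- Classical decidability, as in `φ`, so that `φ η x` is definitionally `foldInsert u v (η x)`.
open Classical in
noncomputable def foldInsert {V : Type*} (u v : V) (s : Set V) : Set V :=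
  if v ∈ s then insert u s else s

section foldInsert

variable {V : Type*} {u v a : V} {s t : Set V}

theorem mem_foldInsert : a ∈ foldInsert u v s ↔ a ∈ s ∨ (a = u ∧ v ∈ s) := by
  by_cases hv : v ∈ s <;> simp [foldInsert, hv, or_comm]

theorem subset_foldInsert : s ⊆ foldInsert u v s :=
  fun _ ha => mem_foldInsert.2 (Or.inl ha)

theorem foldInsert_mono (hst : s ⊆ t) : foldInsert u v s ⊆ foldInsert u v t := by
  intro a ha
  rcases mem_foldInsert.1 ha with ha | ⟨rfl, hv⟩
  · exact subset_foldInsert (hst ha)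
  · exact mem_foldInsert.2 (Or.inr ⟨rfl, hst hv⟩)

theorem foldInsert_idem : foldInsert u v (foldInsert u v s) = foldInsert u v s := by
  by_cases hv : v ∈ s <;> simp [foldInsert, hv]

theorem mem_foldInsert_of_mem_foldInsert (hv : v ∈ foldInsert u v s) : u ∈ foldInsert u v s := by
  by_cases hvs : v ∈ s
  · simp [foldInsert, hvs]
  · simp [foldInsert, hvs] at hv

end foldInsert

namespace SimpleGraph

variable {V : Type*} {G : SimpleGraph V} {u v a : V} {s t : Set V}

theorem forall_adj_foldInsert (hfold : G.neighborSet v ⊆ G.neighborSet u)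
    (h : ∀ b ∈ t, G.Adj a b) : ∀ b ∈ foldInsert u v t, G.Adj a b := by
  intro b hb
  rcases mem_foldInsert.1 hb with hb | ⟨rfl, hv⟩
  · exact h b hb
  · exact (hfold (h v hv).symm).symm

theorem forall_adj_foldInsert_foldInsert (hfold : G.neighborSet v ⊆ G.neighborSet u)
    (h : ∀ a ∈ s, ∀ b ∈ t, G.Adj a b) :
    ∀ a ∈ foldInsert u v s, ∀ b ∈ foldInsert u v t, G.Adj a b := by
  intro a ha b hb
  have hb_adj : ∀ a' ∈ s, G.Adj b a' :=
    fun a' ha' => (forall_adj_foldInsert hfold (h a' ha') b hb).symm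
  exact (forall_adj_foldInsert hfold hb_adj a ha).symm

end SimpleGraph

open Classical in
theorem stmt_11_general {VG VH : Type*} (G : SimpleGraph VG) (H : SimpleGraph VH)
    (v u : VG) (hfold : G.neighborSet v ⊆ G.neighborSet u) :
    letI S : Set (VH → Set VG) :=
      {η | (∀ x, (η x).Nonempty) ∧
        ∀ x y, H.Adj x y → ∀ a ∈ η x, ∀ b ∈ η y, G.Adj a b}
    letI Y : Set (VH → Set VG) := {η ∈ S | ∀ x, v ∈ η x → u ∈ η x}
    letI φ : (VH → Set VG) → (VH → Set VG) :=
      fun η x => if v ∈ η x then insert u (η x) else η x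
    (∀ η ∈ S, φ η ∈ Y) ∧
    (∀ η η' : VH → Set VG, η ≤ η' → φ η ≤ φ η') ∧
    (∀ η, φ (φ η) = φ η) ∧
    (∀ η, η ≤ φ η) := by
  refine ⟨?_, fun η η' h x => foldInsert_mono (h x), fun η => funext fun x => foldInsert_idem,
    fun η x => subset_foldInsert⟩
  rintro η ⟨hne, hadj⟩
  exact ⟨⟨fun x => (hne x).mono subset_foldInsert, fun x y hxy =>
    SimpleGraph.forall_adj_foldInsert_foldInsert hfold (hadj x y hxy)⟩,
    fun x => mem_foldInsert_of_mem_foldInsert⟩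

open Classical in
/-- Let `G − v` be a fold of `G` witnessed by `u`, `H` a graph, and
`Y = {η : ∀ x, v ∈ η(x) → u ∈ η(x)}` inside the face poset of `Hom(H,G)`.
The map `φ` with `φη(x) = η(x) ∪ {u}` if `v ∈ η(x)` and `φη(x) = η(x)`
otherwise is well defined as a map into `Y` and is an ascending closure
operator on the face poset of `Hom(H,G)`. -/
theorem stmt_11 {VG VH : Type*} (G : SimpleGraph VG) (H : SimpleGraph VH)
    (v u : VG) (huv : u ≠ v) (hfold : G.neighborSet v ⊆ G.neighborSet u) :
    letI S : Set (VH → Set VG) :=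
      {η | (∀ x, (η x).Nonempty) ∧
        ∀ x y, H.Adj x y → ∀ a ∈ η x, ∀ b ∈ η y, G.Adj a b}
    letI Y : Set (VH → Set VG) := {η ∈ S | ∀ x, v ∈ η x → u ∈ η x}
    letI φ : (VH → Set VG) → (VH → Set VG) :=
      fun η x => if v ∈ η x then insert u (η x) else η x
    (∀ η ∈ S, φ η ∈ Y) ∧
    (∀ η η' : VH → Set VG, η ≤ η' → φ η ≤ φ η') ∧
    (∀ η, φ (φ η) = φ η) ∧
    (∀ η, η ≤ φ η) :=
  stmt_11_general G H v u hfold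
end

section
/- Let G − v be a fold of G witnessed by u, and H a graph. Let Y = {η : for all x, v ∈ η(x) implies u ∈ η(x)} inside the face poset of Hom(H,G). Define ψ on Y by ψη(x) = η(x) \ {v}. Then ψ is well-defined (values remain nonempty and satisfy the edge condition), and ψ is a descending closure operator on Y whose image is the face poset of Hom(H, G−v). -/
/-- Let `G − v` be a fold of `G` witnessed by `u`, `H` a graph, and
`Y = {η : ∀ x, v ∈ η(x) → u ∈ η(x)}` inside the face poset of `Hom(H,G)`.
The map `ψ` with `ψη(x) = η(x) \ {v}` is well defined on `Y` (values remain
nonempty and satisfy the edge condition) and is a descending closure operator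
on `Y` whose image is the face poset of `Hom(H,G−v)`, identified with
`{η : ∀ x, v ∉ η(x)}`. -/
theorem stmt_12 {VG VH : Type*} (G : SimpleGraph VG) (H : SimpleGraph VH)
    (v u : VG) (huv : u ≠ v) (hfold : G.neighborSet v ⊆ G.neighborSet u) :
    letI S : Set (VH → Set VG) :=
      {η | (∀ x, (η x).Nonempty) ∧
        ∀ x y, H.Adj x y → ∀ a ∈ η x, ∀ b ∈ η y, G.Adj a b}
    letI Y : Set (VH → Set VG) := {η ∈ S | ∀ x, v ∈ η x → u ∈ η x}
    letI ψ : (VH → Set VG) → (VH → Set VG) := fun η x => η x \ {v}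
    (∀ η ∈ Y, ψ η ∈ Y) ∧
    (∀ η ∈ Y, ∀ η' ∈ Y, η ≤ η' → ψ η ≤ ψ η') ∧
    (∀ η ∈ Y, ψ (ψ η) = ψ η) ∧
    (∀ η ∈ Y, ψ η ≤ η) ∧
    ψ '' Y = {η ∈ S | ∀ x, v ∉ η x} := by
  have hne : ∀ η : VH → Set VG, ((∀ x, (η x).Nonempty) ∧
      ∀ x y, H.Adj x y → ∀ a ∈ η x, ∀ b ∈ η y, G.Adj a b) ∧ (∀ x, v ∈ η x → u ∈ η x) →
      ∀ x, (η x \ {v} : Set VG).Nonempty := by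
    intro η ⟨⟨hn, _⟩, hY⟩ x
    obtain ⟨a, ha⟩ := hn x
    by_cases hav : a = v
    · exact ⟨u, hY x (hav ▸ ha), huv⟩
    · exact ⟨a, ha, hav⟩
  have hmem : ∀ η : VH → Set VG, ((∀ x, (η x).Nonempty) ∧
      ∀ x y, H.Adj x y → ∀ a ∈ η x, ∀ b ∈ η y, G.Adj a b) ∧ (∀ x, v ∈ η x → u ∈ η x) →
      ((∀ x, ((η x \ {v} : Set VG)).Nonempty) ∧
      ∀ x y, H.Adj x y → ∀ a ∈ η x \ {v}, ∀ b ∈ η y \ {v}, G.Adj a b) ∧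
      (∀ x, v ∈ η x \ {v} → u ∈ η x \ {v}) := by
    intro η hη
    exact ⟨⟨hne η hη, fun x y hxy a ha b hb =>
      hη.1.2 x y hxy a ha.1 b hb.1⟩, fun x hv => absurd rfl hv.2⟩
  refine ⟨hmem, fun η _ η' _ h x => Set.diff_subset_diff_left (h x),
    fun η _ => funext fun x => by simp [Set.diff_diff],
    fun η _ x => Set.diff_subset, ?_⟩
  ext η
  constructor
  · rintro ⟨η', hη', rfl⟩
    exact ⟨(hmem η' hη').1, fun x hv => hv.2 rfl⟩
  · rintro ⟨hS, hv⟩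
    refine ⟨η, ⟨hS, fun x h => absurd h (hv x)⟩, funext fun x => ?_⟩
    show η x \ {v} = η x
    rw [Set.diff_singleton_eq_self (hv x)]
end

section
/- With notation as above (G − v a fold of G witnessed by u, H a graph, φ and ψ the ascending/descending closure operators on the face poset of Hom(H,G) and on Y), the composite ψ ∘ φ equals the map on face posets induced by postcomposition with the folding homomorphism f : G → G−v; explicitly, (ψ∘φ)(η)(x) = f(η(x)) = (η(x) \ {v}) ∪ {u if v ∈ η(x)}. -/
open Classical in
/-- With `φ` and `ψ` the ascending/descending closure operators associated on
the face poset of `Hom(H,G)` to a fold `G − v` of `G` witnessed by `u`, the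
composite `ψ ∘ φ` equals the map induced by the folding homomorphism
`f : G → G−v` (`f v = u`, `f x = x` otherwise): `(ψ∘φ)(η)(x) = f(η(x))`. -/
theorem stmt_13 {VG VH : Type*} (G : SimpleGraph VG) (H : SimpleGraph VH)
    (v u : VG) (huv : u ≠ v) (hfold : G.neighborSet v ⊆ G.neighborSet u) :
    letI S : Set (VH → Set VG) :=
      {η | (∀ x, (η x).Nonempty) ∧
        ∀ x y, H.Adj x y → ∀ a ∈ η x, ∀ b ∈ η y, G.Adj a b}
    letI φ : (VH → Set VG) → (VH → Set VG) :=
      fun η x => if v ∈ η x then insert u (η x) else η x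
    letI ψ : (VH → Set VG) → (VH → Set VG) := fun η x => η x \ {v}
    letI f : VG → VG := fun w => if w = v then u else w
    ∀ η ∈ S, ψ (φ η) = fun x => f '' η x := by
  intro η _
  funext x
  ext w
  simp only [Set.mem_diff, Set.mem_singleton_iff, Set.mem_image, Set.mem_insert_iff]
  by_cases hv : v ∈ η x <;> simp only [hv, if_true, if_false, Set.mem_insert_iff]
  · constructor
    · rintro ⟨h1 | h1, h2⟩
      · exact ⟨v, hv, by simp [h1]⟩
      · exact ⟨w, h1, by simp [h2]⟩
    · rintro ⟨a, ha, rfl⟩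
      by_cases hav : a = v <;> simp [hav, huv, ha]
  · constructor
    · rintro ⟨h1, h2⟩
      exact ⟨w, h1, by simp [h2]⟩
    · rintro ⟨a, ha, rfl⟩
      have hav : a ≠ v := fun h => hv (h ▸ ha)
      simp [hav, ha]
end

section
/- Let G − v be a fold of G witnessed by u, H a graph with V(H) = {x₁,…,x_t} linearly ordered. Partition the face poset of Hom(H,G) as A ∪ B ∪ P₀, where P₀ = {η : v ∉ η(x) for all x} is the face poset of Hom(H,G−v), and for η ∉ P₀, letting i(η) be the least index with v ∈ η(x_{i(η)}), put η ∈ A if u ∉ η(x_{i(η)}) and η ∈ B otherwise. Then the map φ sending α ∈ A to the function agreeing with α except that u is added to α(x_{i(α)}) is a well-defined bijection A → B, and φ(α) covers α in the face poset (φ(α) > α and dim φ(α) = dim α + 1, where dim η = Σ_x (|η(x)| − 1)). -/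
open Classical

/-- The face poset of `Hom(H,G)`: functions assigning to each vertex of `H` a
nonempty finite set of vertices of `G`, satisfying the complete-bipartite edge
condition; ordered by pointwise inclusion. -/
def homFacePoset {VG VH : Type*} (H : SimpleGraph VH) (G : SimpleGraph VG) :
    Set (VH → Finset VG) :=
  {η | (∀ x, (η x).Nonempty) ∧ ∀ x y, H.Adj x y → ∀ a ∈ η x, ∀ b ∈ η y, G.Adj a b}

/-- `dim η = Σ_x (|η(x)| − 1)`. -/
def homDim {VG VH : Type*} [Fintype VH] (η : VH → Finset VG) : ℕ :=
  ∑ x : VH, ((η x).card - 1)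

/-- The least vertex `x` of `H` (in the given linear order) with `v ∈ η x`. -/
noncomputable def minIdx {VG VH : Type*} [Fintype VH] [LinearOrder VH] [Nonempty VH]
    (v : VG) (η : VH → Finset VG) : VH :=
  if h : (Finset.univ.filter (fun x => v ∈ η x)).Nonempty then
    (Finset.univ.filter (fun x => v ∈ η x)).min' h
  else Classical.arbitrary VH

lemma minIdx_congr {VG VH : Type*} [Fintype VH] [LinearOrder VH] [Nonempty VH]
    (v : VG) {η η' : VH → Finset VG} (h : ∀ x, v ∈ η x ↔ v ∈ η' x) :
    minIdx v η = minIdx v η' := by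
  unfold minIdx
  have he : (Finset.univ.filter fun x => v ∈ η x)
      = Finset.univ.filter fun x => v ∈ η' x := by
    ext x; simp [h x]
  rw [he]

lemma minIdx_mem {VG VH : Type*} [Fintype VH] [LinearOrder VH] [Nonempty VH]
    (v : VG) {η : VH → Finset VG} (h : ∃ x, v ∈ η x) : v ∈ η (minIdx v η) := by
  obtain ⟨x, hx⟩ := h
  have hne : (Finset.univ.filter fun x => v ∈ η x).Nonempty := ⟨x, by simp [hx]⟩
  unfold minIdx
  rw [dif_pos hne]
  have := Finset.min'_mem _ hne
  simpa using this

/-- Let `G − v` be a fold of `G` witnessed by `u`, and `H` a graph with linearly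
ordered vertex set.  With `A` (resp. `B`) the elements `η` of the face poset of
`Hom(H,G)` with `v ∈ η(x_{i(η)})` for some `x`, `i(η)` least such, and
`u ∉ η(x_{i(η)})` (resp. `u ∈ η(x_{i(η)})`), the map `Φ` adding `u` to
`η(x_{i(η)})` is a well-defined bijection `A → B`, and `Φ(η)` covers `η`:
`Φ(η) > η` and `dim Φ(η) = dim η + 1`. -/
theorem stmt_14 {VG VH : Type*} [Fintype VH] [LinearOrder VH] [Nonempty VH]
    (G : SimpleGraph VG) (H : SimpleGraph VH)
    (v u : VG) (huv : u ≠ v) (hfold : G.neighborSet v ⊆ G.neighborSet u) :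
    letI S := homFacePoset H G
    letI A : Set (VH → Finset VG) :=
      {η ∈ S | (∃ x, v ∈ η x) ∧ u ∉ η (minIdx v η)}
    letI B : Set (VH → Finset VG) :=
      {η ∈ S | (∃ x, v ∈ η x) ∧ u ∈ η (minIdx v η)}
    letI Φ : (VH → Finset VG) → (VH → Finset VG) :=
      fun η => Function.update η (minIdx v η) (insert u (η (minIdx v η)))
    Set.BijOn Φ A B ∧
    (∀ η ∈ A, η < Φ η ∧ homDim (Φ η) = homDim η + 1) := by

  set Φ : (VH → Finset VG) → (VH → Finset VG) :=
      fun η => Function.update η (minIdx v η) (insert u (η (minIdx v η))) with hΦdef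
  set S : Set (VH → Finset VG) := homFacePoset H G with hSdef
  set A : Set (VH → Finset VG) :=
      {η | η ∈ S ∧ (∃ x, v ∈ η x) ∧ u ∉ η (minIdx v η)} with hAdef
  set B : Set (VH → Finset VG) :=
      {η | η ∈ S ∧ (∃ x, v ∈ η x) ∧ u ∈ η (minIdx v η)} with hBdef
  have hAdj : ∀ {b : VG}, G.Adj v b → G.Adj u b := fun h => hfold h
  -- membership characterizations
  have hmemA : ∀ η, η ∈ A ↔ η ∈ S ∧ (∃ x, v ∈ η x) ∧ u ∉ η (minIdx v η) := by
    intro η; rfl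
  have hmemB : ∀ η, η ∈ B ↔ η ∈ S ∧ (∃ x, v ∈ η x) ∧ u ∈ η (minIdx v η) := by
    intro η; rfl
  have hΦapp : ∀ η x, Φ η x = if x = minIdx v η then insert u (η (minIdx v η)) else η x := by
    intro η x; simp [Φ, Function.update_apply]
  -- v-membership preserved by Φ
  have hvΦ : ∀ η x, v ∈ Φ η x ↔ v ∈ η x := by
    intro η x
    rw [hΦapp]
    by_cases hx : x = minIdx v η
    · subst hx; simp [huv.symm]
    · simp [hx]
  have hminΦ : ∀ η, minIdx v (Φ η) = minIdx v η := by
    intro η; exact minIdx_congr v (fun x => hvΦ η x)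
  -- Φ η ∈ S for η ∈ A
  have hΦS : ∀ η ∈ A, Φ η ∈ S := by
    intro η hη
    obtain ⟨hS', hv, _⟩ := (hmemA η).1 hη
    obtain ⟨hne, hedge⟩ := hS'
    set i := minIdx v η with hi
    have hvI : v ∈ η i := minIdx_mem v hv
    refine ⟨?_, ?_⟩
    · intro x
      rw [hΦapp]
      split
      · exact ⟨u, Finset.mem_insert_self _ _⟩
      · exact hne x
    · intro x y hxy a ha b hb
      rw [hΦapp] at ha hb
      have hxyne : x ≠ y := H.ne_of_adj hxy
      have hcase : ∀ {c : VG} {z : VH},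
          c ∈ (if z = i then insert u (η i) else η z) → c = u ∧ z = i ∨ c ∈ η z := by
        intro c z hc
        split at hc
        · rcases Finset.mem_insert.1 hc with h | h
          · exact Or.inl ⟨h, by assumption⟩
          · subst ‹z = i›; exact Or.inr h
        · exact Or.inr hc
      rcases hcase ha with ⟨rfl, rfl⟩ | ha'
      · rcases hcase hb with ⟨rfl, rfl⟩ | hb'
        · exact absurd rfl hxyne
        · exact hAdj (hedge _ _ hxy v hvI b hb')
      · rcases hcase hb with ⟨rfl, rfl⟩ | hb'
        · exact (hAdj (hedge _ _ hxy.symm v hvI a ha')).symm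
        · exact hedge _ _ hxy a ha' b hb'
  -- MapsTo
  have hmaps : Set.MapsTo Φ A B := by
    intro η hη
    obtain ⟨hS, hv, hu⟩ := (hmemA η).1 hη
    rw [hmemB]
    refine ⟨hΦS η hη, ⟨minIdx v η, ?_⟩, ?_⟩
    · rw [hvΦ]; exact minIdx_mem v hv
    · rw [hminΦ, hΦapp]; simp
  -- InjOn
  have hinj : Set.InjOn Φ A := by
    intro η₁ h₁ η₂ h₂ heq
    obtain ⟨_, hv₁, hu₁⟩ := (hmemA η₁).1 h₁
    obtain ⟨_, hv₂, hu₂⟩ := (hmemA η₂).1 h₂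
    have hieq : minIdx v η₁ = minIdx v η₂ := by
      rw [← hminΦ η₁, ← hminΦ η₂, heq]
    funext x
    have hx := congrFun heq x
    rw [hΦapp, hΦapp, hieq] at hx
    by_cases h : x = minIdx v η₂
    · rw [if_pos h, if_pos h] at hx
      rw [h]
      have h1 := congrArg (fun s => Finset.erase s u) hx
      simpa [Finset.erase_insert (hieq ▸ hu₁), Finset.erase_insert hu₂] using h1
    · rwa [if_neg h, if_neg h] at hx
  -- SurjOn
  have hsurj : Set.SurjOn Φ A B := by
    intro β hβ
    obtain ⟨hS', hv, hu⟩ := (hmemB β).1 hβ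
    obtain ⟨hne, hedge⟩ := hS'
    set i := minIdx v β with hi
    have hvI : v ∈ β i := minIdx_mem v hv
    set α : VH → Finset VG := Function.update β i (Finset.erase (β i) u) with hα
    have hαapp : ∀ x, α x = if x = i then Finset.erase (β i) u else β x := by
      intro x; simp [hα, Function.update_apply]
    have hvα : ∀ x, v ∈ α x ↔ v ∈ β x := by
      intro x; rw [hαapp]
      by_cases hx : x = i
      · subst hx; simp [huv.symm, Finset.mem_erase]
      · simp [hx]
    have hminα : minIdx v α = i := minIdx_congr v hvα
    have hαsub : ∀ x, α x ⊆ β x := by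
      intro x; rw [hαapp]; split
      · subst ‹x = i›; exact Finset.erase_subset _ _
      · exact Finset.Subset.refl _
    have hαA : α ∈ A := by
      rw [hmemA]
      refine ⟨⟨?_, ?_⟩, ⟨i, ?_⟩, ?_⟩
      · intro x; rw [hαapp]
        split
        · exact ⟨v, Finset.mem_erase.2 ⟨huv.symm, hvI⟩⟩
        · exact hne x
      · exact fun x y hxy a ha b hb => hedge x y hxy a (hαsub x ha) b (hαsub y hb)
      · rw [hvα]; exact hvI
      · rw [hminα, hαapp, if_pos rfl]; simp
    refine ⟨α, hαA, ?_⟩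
    funext x
    rw [hΦapp, hminα]
    by_cases hx : x = i
    · subst hx
      rw [if_pos rfl, hαapp, if_pos rfl, Finset.insert_erase hu]
    · rw [if_neg hx, hαapp, if_neg hx]
  refine ⟨⟨hmaps, hinj, hsurj⟩, ?_⟩
  intro η hη
  obtain ⟨hS', hv, hu⟩ := (hmemA η).1 hη
  obtain ⟨hne, hedge⟩ := hS'
  have hvI : v ∈ η (minIdx v η) := minIdx_mem v hv
  constructor
  · have hle : η ≤ Φ η := by
      intro x
      rw [hΦapp]
      split
      · next h => rw [h]; exact Finset.subset_insert _ _
      · exact Finset.Subset.refl _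
    have hneq : η ≠ Φ η := by
      intro h
      have hc := congrFun h (minIdx v η)
      rw [hΦapp, if_pos rfl] at hc
      exact hu (hc ▸ Finset.mem_insert_self u _)
    exact lt_of_le_of_ne hle hneq
  · unfold homDim
    have hsplit : ∀ x, ((Φ η x).card - 1)
        = ((η x).card - 1) + if x = minIdx v η then 1 else 0 := by
      intro x
      rw [hΦapp]
      by_cases hx : x = minIdx v η
      · subst hx
        rw [if_pos rfl, if_pos rfl, Finset.card_insert_of_notMem hu]
        have hcard : 1 ≤ (η (minIdx v η)).card := Finset.card_pos.2 ⟨v, hvI⟩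
        omega
      · rw [if_neg hx, if_neg hx, Nat.add_zero]
    rw [Finset.sum_congr rfl (fun x _ => hsplit x), Finset.sum_add_distrib]
    simp
end
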